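/- arXiv:2203.09557 — 2 statements merged into one kernel-verified Lean document; each statement's English description precedes it below -/
import Mathlib

section
/- Let P and Q be probability measures on a measurable space X, let F be a convex set of measurable functions with F ⊆ L²(P) ∩ L¹(Q) and f ∈ F ⟹ −f ∈ F, and let μ > 0. Suppose f* ∈ F attains the supremum over f ∈ F of { E_Q[f] − E_P[f] − (μ/4)·Var_P[f] }. Then the infimum over all finite signed measures R with R ≪ P, dR/dP ∈ L²(P), and R(X) = 1 of { (1/μ)·D₂(R‖P) + IPM_F(Q, R) } equals E_Q[f*] − E_P[f*] − (μ/4)·Var_P[f*], and this infimum is attained at the measure R* with dR*/dP = 1 + (μ/2)(f* − E_P[f*]). -/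
/-! The objective `E_Q f - E_P f - (μ/4) Var_P f` is a concave quadratic, so maximality of `f*` on
the convex set `F` yields the first-order condition `E_Q f - E_P[f w*] ≤ E_Q f* - E_P[f* w*]` for
`f ∈ F`, where `w* = 1 + (μ/2)(f* - E_P f*)`: the IPM at `R*` is attained at `f*`.
For a feasible density `w` one has `D₂(R‖P) = Var_P w` and `E_P[f* w] = E_P f* + Cov_P(f*, w)`,
so weak duality reduces to `Cov(f*, w) ≤ (μ/4) Var f* + Var w / μ`, which is
`Var(w - (μ/2) f*) ≥ 0`; equality holds at `w*` because `w* - (μ/2) f*` is constant. -/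

open MeasureTheory ProbabilityTheory Filter Topology

lemma nonpos_of_forall_mul_le_sq_mul {L c : ℝ} (h : ∀ t : ℝ, 0 < t → t ≤ 1 → t * L ≤ t ^ 2 * c) :
    L ≤ 0 := by
  have hlim : Tendsto (fun t : ℝ => t * c) (𝓝[>] 0) (𝓝 0) :=
    ((continuous_id.mul continuous_const).tendsto' 0 0 (by simp)).mono_left nhdsWithin_le_nhds
  refine ge_of_tendsto hlim ?_
  filter_upwards [Ioc_mem_nhdsGT one_pos] with t ⟨ht0, ht1⟩
  exact le_of_mul_le_mul_left (by nlinarith [h t ht0 ht1]) ht0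

section

variable {X : Type*} [MeasurableSpace X] {P : Measure X} [IsProbabilityMeasure P]

lemma variance_eq_integral_sq_sub_sq {f : X → ℝ} (hf : MemLp f 2 P) :
    Var[f; P] = ∫ x, f x ^ 2 ∂P - (∫ x, f x ∂P) ^ 2 := by
  simp [variance_eq_sub hf]

lemma integral_mul_eq_covariance_add {f g : X → ℝ} (hf : MemLp f 2 P) (hg : MemLp g 2 P) :
    ∫ x, f x * g x ∂P = cov[f, g; P] + (∫ x, f x ∂P) * ∫ x, g x ∂P := by
  simp [covariance_eq_sub hf hg]

lemma covariance_le_mul_variance_add_variance_div {f g : X → ℝ} (hf : MemLp f 2 P)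
    (hg : MemLp g 2 P) {c : ℝ} (hc : 0 < c) :
    cov[f, g; P] ≤ c / 4 * Var[f; P] + Var[g; P] / c := by
  have h := variance_nonneg (g - (c / 2) • f) P
  rw [variance_sub hg (hf.const_smul _), variance_smul, covariance_smul_right,
    covariance_comm] at h
  refine le_of_mul_le_mul_left ?_ hc
  rw [mul_add, mul_div_cancel₀ _ hc.ne']
  nlinarith

lemma integral_sq_sub_one_eq_variance {w : X → ℝ} (hw : MemLp w 2 P) (hw1 : ∫ x, w x ∂P = 1) :
    ∫ x, (w x ^ 2 - 1) ∂P = Var[w; P] := by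
  rw [integral_sub hw.integrable_sq (integrable_const 1), variance_eq_integral_sq_sub_sq hw, hw1]
  simp

noncomputable def balancingDensity (P : Measure X) (μ : ℝ) (f : X → ℝ) : X → ℝ :=
  fun x => 1 + (μ / 2) * (f x - ∫ x', f x' ∂P)

variable {μ : ℝ} {f g : X → ℝ}

lemma memLp_balancingDensity (hf : MemLp f 2 P) : MemLp (balancingDensity P μ f) 2 P := by
  exact (memLp_const (1 : ℝ)).add ((hf.sub (memLp_const (∫ x, f x ∂P))).const_mul (μ / 2))

lemma integral_balancingDensity (hf : Integrable f P) : ∫ x, balancingDensity P μ f x ∂P = 1 := by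
  have hint : Integrable (fun x => μ / 2 * (f x - ∫ x', f x' ∂P)) P :=
    (hf.sub (integrable_const _)).const_mul _
  unfold balancingDensity
  rw [integral_add (integrable_const _) hint, integral_const_mul,
    integral_sub hf (integrable_const _)]
  simp

lemma covariance_balancingDensity_right (hf : MemLp f 2 P) :
    cov[g, balancingDensity P μ f; P] = μ / 2 * cov[g, f; P] := by
  unfold balancingDensity
  rw [covariance_const_add_right, covariance_const_mul_right,
    covariance_sub_const_right (hf.integrable one_le_two)]
  exact ((hf.sub (memLp_const _)).const_mul _).integrable one_le_two

lemma integral_mul_balancingDensity (hg : MemLp g 2 P) (hf : MemLp f 2 P) :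
    ∫ x, g x * balancingDensity P μ f x ∂P = ∫ x, g x ∂P + μ / 2 * cov[g, f; P] := by
  rw [integral_mul_eq_covariance_add hg (memLp_balancingDensity hf),
    covariance_balancingDensity_right hf, integral_balancingDensity (hf.integrable one_le_two)]
  ring

lemma variance_balancingDensity (hf : MemLp f 2 P) :
    Var[balancingDensity P μ f; P] = (μ / 2) ^ 2 * Var[f; P] := by
  rw [← covariance_self (memLp_balancingDensity hf).aemeasurable, covariance_comm,
    covariance_balancingDensity_right hf, covariance_comm,
    covariance_balancingDensity_right hf, covariance_self hf.aemeasurable]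
  ring

noncomputable def penalizedObjective (P Q : Measure X) (μ : ℝ) (f : X → ℝ) : ℝ :=
  ∫ x, f x ∂Q - ∫ x, f x ∂P - μ / 4 * Var[f; P]

variable {Q : Measure X} {h : X → ℝ} {F : Set (X → ℝ)} {fstar : X → ℝ}

lemma penalizedObjective_add_smul (hf : MemLp f 2 P) (hfQ : Integrable f Q)
    (hh : MemLp h 2 P) (hhQ : Integrable h Q) (t : ℝ) :
    penalizedObjective P Q μ (f + t • h) = penalizedObjective P Q μ f
      + t * (∫ x, h x ∂Q - ∫ x, h x ∂P - μ / 2 * cov[f, h; P]) - μ / 4 * t ^ 2 * Var[h; P] := by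
  simp only [penalizedObjective, Pi.add_apply, Pi.smul_apply, smul_eq_mul]
  rw [integral_add hfQ (hhQ.const_mul t), integral_add (hf.integrable one_le_two)
    ((hh.integrable one_le_two).const_mul t), integral_const_mul, integral_const_mul,
    variance_add hf (hh.const_smul t), variance_smul, covariance_smul_right]
  ring

lemma penalizedObjective_variational_ineq (hconv : Convex ℝ F)
    (hF : ∀ f ∈ F, MemLp f 2 P ∧ Integrable f Q) (hfstar : fstar ∈ F)
    (hmax : ∀ f ∈ F, penalizedObjective P Q μ f ≤ penalizedObjective P Q μ fstar) (hf : f ∈ F) :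
    ∫ x, f x ∂Q - ∫ x, f x ∂P - μ / 2 * cov[fstar, f; P]
      ≤ ∫ x, fstar x ∂Q - ∫ x, fstar x ∂P - μ / 2 * Var[fstar; P] := by
  obtain ⟨hf2, hfQ⟩ := hF f hf
  obtain ⟨hs2, hsQ⟩ := hF fstar hfstar
  have hdir : ∫ x, (f - fstar) x ∂Q - ∫ x, (f - fstar) x ∂P - μ / 2 * cov[fstar, f - fstar; P]
      ≤ 0 := by
    refine nonpos_of_forall_mul_le_sq_mul (c := μ / 4 * Var[f - fstar; P]) fun t ht0 ht1 => ?_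
    have hmem := hconv.add_smul_sub_mem hfstar hf ⟨ht0.le, ht1⟩
    have hle := hmax _ hmem
    rw [penalizedObjective_add_smul hs2 hsQ (hf2.sub hs2) (hfQ.sub hsQ)] at hle
    linarith
  simp only [Pi.sub_apply] at hdir
  rw [integral_sub hfQ hsQ, integral_sub (hf2.integrable one_le_two) (hs2.integrable one_le_two),
    covariance_sub_right hs2 hf2 hs2, covariance_self hs2.aemeasurable] at hdir
  linarith

lemma penalizedObjective_le_chiSq_add {w : X → ℝ} (hf : MemLp f 2 P) (hw : MemLp w 2 P)
    (hw1 : ∫ x, w x ∂P = 1) (hμ : 0 < μ) :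
    penalizedObjective P Q μ f
      ≤ 1 / μ * ∫ x, (w x ^ 2 - 1) ∂P + (∫ x, f x ∂Q - ∫ x, f x * w x ∂P) := by
  have hcov := covariance_le_mul_variance_add_variance_div hf hw hμ
  rw [integral_sq_sub_one_eq_variance hw hw1, integral_mul_eq_covariance_add hf hw, hw1,
    one_div_mul_eq_div, penalizedObjective]
  linarith

lemma chiSq_add_eq_penalizedObjective_of_balancingDensity (hf : MemLp f 2 P) :
    1 / μ * ∫ x, (balancingDensity P μ f x ^ 2 - 1) ∂P
      + (∫ x, f x ∂Q - ∫ x, f x * balancingDensity P μ f x ∂P) = penalizedObjective P Q μ f := by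
  rw [integral_sq_sub_one_eq_variance (memLp_balancingDensity hf)
      (integral_balancingDensity (hf.integrable one_le_two)),
    variance_balancingDensity hf, integral_mul_balancingDensity hf hf,
    covariance_self hf.aemeasurable, penalizedObjective]
  field_simp
  ring

lemma isGreatest_integral_sub_integral_mul_balancingDensity (hconv : Convex ℝ F)
    (hF : ∀ f ∈ F, MemLp f 2 P ∧ Integrable f Q) (hfstar : fstar ∈ F)
    (hmax : ∀ f ∈ F, penalizedObjective P Q μ f ≤ penalizedObjective P Q μ fstar) :
    IsGreatest ((fun f => ∫ x, f x ∂Q - ∫ x, f x * balancingDensity P μ fstar x ∂P) '' F)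
      (∫ x, fstar x ∂Q - ∫ x, fstar x * balancingDensity P μ fstar x ∂P) := by
  refine ⟨⟨fstar, hfstar, rfl⟩, ?_⟩
  rintro _ ⟨f, hf, rfl⟩
  have hs2 := (hF fstar hfstar).1
  have hineq := penalizedObjective_variational_ineq hconv hF hfstar hmax hf
  dsimp only
  rw [integral_mul_balancingDensity (hF f hf).1 hs2, integral_mul_balancingDensity hs2 hs2,
    covariance_self hs2.aemeasurable, covariance_comm]
  linarith

end

theorem stmt_4_general {X : Type*} [MeasurableSpace X] (P Q : Measure X)
    [IsProbabilityMeasure P]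
    (F : Set (X → ℝ)) (hconv : Convex ℝ F)
    (hF : ∀ f ∈ F, MemLp f 2 P ∧ Integrable f Q)
    (μ : ℝ) (hμ : 0 < μ)
    (obj : (X → ℝ) → ℝ)
    (hobj : obj = fun f => (∫ x, f x ∂Q) - (∫ x, f x ∂P)
      - (μ / 4) * ((∫ x, (f x) ^ 2 ∂P) - (∫ x, f x ∂P) ^ 2))
    (fstar : X → ℝ) (hfstarF : fstar ∈ F)
    (hfstarmax : ∀ f ∈ F, obj f ≤ obj fstar)
    (wstar : X → ℝ) (hwstar : wstar = fun x => 1 + (μ / 2) * (fstar x - ∫ x', fstar x' ∂P)) :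
    -- R* is feasible
    (MemLp wstar 2 P ∧ (∫ x, wstar x ∂P) = 1) ∧
    -- the infimum is attained at R*: its objective value is exactly obj f*
    (∃ b : ℝ, IsLUB ((fun f : X → ℝ => (∫ x, f x ∂Q) - ∫ x, f x * wstar x ∂P) '' F) b ∧
      (1 / μ) * (∫ x, ((wstar x) ^ 2 - 1) ∂P) + b = obj fstar) ∧
    -- obj f* is a lower bound for the objective over all feasible R
    (∀ w : X → ℝ, MemLp w 2 P → (∫ x, w x ∂P) = 1 →
      ∀ b : ℝ, IsLUB ((fun f : X → ℝ => (∫ x, f x ∂Q) - ∫ x, f x * w x ∂P) '' F) b →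
      obj fstar ≤ (1 / μ) * (∫ x, ((w x) ^ 2 - 1) ∂P) + b) := by
  have hpen : ∀ f ∈ F, obj f = penalizedObjective P Q μ f := fun f hf => by
    rw [hobj, penalizedObjective, variance_eq_integral_sq_sub_sq (hF f hf).1]
  have hmax : ∀ f ∈ F, penalizedObjective P Q μ f ≤ penalizedObjective P Q μ fstar :=
    fun f hf => hpen f hf ▸ hpen fstar hfstarF ▸ hfstarmax f hf
  have hs2 := (hF fstar hfstarF).1
  obtain rfl : wstar = balancingDensity P μ fstar := hwstar
  rw [hpen fstar hfstarF]
  refine ⟨⟨memLp_balancingDensity hs2, integral_balancingDensity (hs2.integrable one_le_two)⟩,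
    ⟨_, (isGreatest_integral_sub_integral_mul_balancingDensity hconv hF hfstarF hmax).isLUB,
      chiSq_add_eq_penalizedObjective_of_balancingDensity hs2⟩, ?_⟩
  intro w hw hw1 b hb
  have hle := penalizedObjective_le_chiSq_add (Q := Q) hs2 hw hw1 hμ
  linarith [hb.1 ⟨fstar, hfstarF, rfl⟩]

/-- strong duality for the penalized balancing-weights problem.  Signed
measures `R ≪ P` with `dR/dP ∈ L²(P)` and `R(X) = 1` are encoded by their densities
`w = dR/dP`.  If `f* ∈ F` attains the supremum of `E_Q[f] − E_P[f] − (μ/4)·Var_P[f]` over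
the convex symmetric class `F ⊆ L²(P) ∩ L¹(Q)`, then the infimum over feasible `R` of
`(1/μ)·D₂(R‖P) + IPM_F(Q,R)` equals this supremal value, attained at the measure with
density `1 + (μ/2)(f* − E_P[f*])`.  (For each feasible `R`, `IPM_F(Q,R)` is rendered as a
real number `b` with `IsLUB`; measures whose IPM set has no real least upper bound have
infinite objective value and impose no constraint.) -/
theorem stmt_4 {X : Type*} [MeasurableSpace X] (P Q : Measure X)
    [IsProbabilityMeasure P] [IsProbabilityMeasure Q]
    (F : Set (X → ℝ)) (hconv : Convex ℝ F)
    (hF : ∀ f ∈ F, MemLp f 2 P ∧ Integrable f Q)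
    (hsymm : ∀ f ∈ F, -f ∈ F)
    (μ : ℝ) (hμ : 0 < μ)
    (obj : (X → ℝ) → ℝ)
    (hobj : obj = fun f => (∫ x, f x ∂Q) - (∫ x, f x ∂P)
      - (μ / 4) * ((∫ x, (f x) ^ 2 ∂P) - (∫ x, f x ∂P) ^ 2))
    (fstar : X → ℝ) (hfstarF : fstar ∈ F)
    (hfstarmax : ∀ f ∈ F, obj f ≤ obj fstar)
    (wstar : X → ℝ) (hwstar : wstar = fun x => 1 + (μ / 2) * (fstar x - ∫ x', fstar x' ∂P)) :
    -- R* is feasible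
    (MemLp wstar 2 P ∧ (∫ x, wstar x ∂P) = 1) ∧
    -- the infimum is attained at R*: its objective value is exactly obj f*
    (∃ b : ℝ, IsLUB ((fun f : X → ℝ => (∫ x, f x ∂Q) - ∫ x, f x * wstar x ∂P) '' F) b ∧
      (1 / μ) * (∫ x, ((wstar x) ^ 2 - 1) ∂P) + b = obj fstar) ∧
    -- obj f* is a lower bound for the objective over all feasible R
    (∀ w : X → ℝ, MemLp w 2 P → (∫ x, w x ∂P) = 1 →
      ∀ b : ℝ, IsLUB ((fun f : X → ℝ => (∫ x, f x ∂Q) - ∫ x, f x * w x ∂P) '' F) b →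
      obj fstar ≤ (1 / μ) * (∫ x, ((w x) ^ 2 - 1) ∂P) + b) :=
  stmt_4_general P Q F hconv hF μ hμ obj hobj fstar hfstarF hfstarmax wstar hwstar
end

section
/- There exists a universal constant C > 0 with the following property. For every dimension d ≥ 1, every pair of probability measures Q and R on ℝ^d, every K > 0, and every β ∈ ℝ^d with ‖β‖₂ ≤ 1 such that ∫ exp(⟨β,x⟩²/K²) dQ(x) ≤ 2 and ∫ exp(⟨β,x⟩²/K²) dR(x) ≤ 2, if δ := ‖Q − R‖_TV satisfies 0 < δ ≤ 1/2, then |∫⟨β,x⟩ dQ(x) − ∫⟨β,x⟩ dR(x)| ≤ C·K·δ·√(log(1/δ)). -/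
open MeasureTheory
open scoped RealInnerProductSpace ENNReal

/-- The total variation norm of a finite signed measure: the total mass of its total
variation measure. -/
noncomputable def tvNorm {X : Type*} [MeasurableSpace X]
    (s : MeasureTheory.SignedMeasure X) : ℝ :=
  (s.totalVariation Set.univ).toReal

/-!
Split `f` at the level `M`. On `{|f| ≤ M}` the two integrals differ by at most `M δ`, because
`Q - R = μ⁺ - μ⁻` with `μ⁺(X) + μ⁻(X) = δ`. On `{|f| > M}` the pointwise bound
`|t| ≤ K e^{-M²/(2K²)} e^{t²/K²}` and the exponential moment bound make each tail integral at most
`2 K e^{-M²/(2K²)}`. Choosing `M = K √(2 log(1/δ))` turns this into `2 K δ`, so the bias is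
`K δ (√(2 log(1/δ)) + 4) = O(K δ √(log(1/δ)))`.
-/

open Real

lemma abs_le_mul_exp_sq_div {K : ℝ} (hK : 0 < K) (t : ℝ) :
    |t| ≤ K * exp (t ^ 2 / (2 * K ^ 2)) := by
  set u := |t| / K
  have hu : u ≤ exp (u ^ 2 / 2) := by
    nlinarith [sq_nonneg (u - 1), add_one_le_exp (u ^ 2 / 2)]
  have hu_sq : u ^ 2 / 2 = t ^ 2 / (2 * K ^ 2) := by
    rw [div_pow, sq_abs]; ring
  calc |t| = K * u := by simp only [u]; field_simp
    _ ≤ K * exp (t ^ 2 / (2 * K ^ 2)) := by rw [← hu_sq]; gcongr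

lemma abs_le_mul_exp_neg_mul_exp_sq_div {K M t : ℝ} (hK : 0 < K) (hMt : M ^ 2 ≤ t ^ 2) :
    |t| ≤ K * exp (-(M ^ 2 / (2 * K ^ 2))) * exp (t ^ 2 / K ^ 2) := by
  have hexponent : t ^ 2 / (2 * K ^ 2) ≤ -(M ^ 2 / (2 * K ^ 2)) + t ^ 2 / K ^ 2 := by
    have : -(M ^ 2 / (2 * K ^ 2)) + t ^ 2 / K ^ 2 - t ^ 2 / (2 * K ^ 2)
        = (t ^ 2 - M ^ 2) / (2 * K ^ 2) := by
      field_simp; ring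
    have : 0 ≤ (t ^ 2 - M ^ 2) / (2 * K ^ 2) := div_nonneg (by linarith) (by positivity)
    linarith
  calc |t| ≤ K * exp (t ^ 2 / (2 * K ^ 2)) := abs_le_mul_exp_sq_div hK t
    _ ≤ K * exp (-(M ^ 2 / (2 * K ^ 2)) + t ^ 2 / K ^ 2) := by gcongr
    _ = K * exp (-(M ^ 2 / (2 * K ^ 2))) * exp (t ^ 2 / K ^ 2) := by rw [exp_add]; ring

section ExpSquareMoment

variable {X : Type*} [MeasurableSpace X] {μ : Measure X} {f : X → ℝ} {K : ℝ}

lemma integrable_exp_sq_div (hf : Measurable f)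
    (hμ : ∫⁻ x, ENNReal.ofReal (exp (f x ^ 2 / K ^ 2)) ∂μ ≤ 2) :
    Integrable (fun x ↦ exp (f x ^ 2 / K ^ 2)) μ := by
  refine ⟨(by fun_prop : Measurable _).aestronglyMeasurable, ?_⟩
  rw [hasFiniteIntegral_iff_ofReal (ae_of_all _ fun x ↦ (exp_pos _).le)]
  exact hμ.trans_lt (by norm_num)

lemma integral_exp_sq_div_le (hf : Measurable f)
    (hμ : ∫⁻ x, ENNReal.ofReal (exp (f x ^ 2 / K ^ 2)) ∂μ ≤ 2) :
    ∫ x, exp (f x ^ 2 / K ^ 2) ∂μ ≤ 2 := by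
  rw [integral_eq_lintegral_of_nonneg_ae (ae_of_all _ fun x ↦ (exp_pos _).le)
    (by fun_prop : Measurable _).aestronglyMeasurable]
  exact ENNReal.toReal_le_of_le_ofReal (by norm_num) (by simpa using hμ)

lemma norm_integral_indicator_le_of_sq_le (hf : Measurable f) (hK : 0 < K)
    (hμ : ∫⁻ x, ENNReal.ofReal (exp (f x ^ 2 / K ^ 2)) ∂μ ≤ 2) {M : ℝ} {s : Set X}
    (hs : ∀ x ∈ s, M ^ 2 ≤ f x ^ 2) :
    ‖∫ x, s.indicator f x ∂μ‖ ≤ 2 * K * exp (-(M ^ 2 / (2 * K ^ 2))) := by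
  set c := K * exp (-(M ^ 2 / (2 * K ^ 2)))
  have hpointwise : ∀ x, ‖s.indicator f x‖ ≤ c * exp (f x ^ 2 / K ^ 2) := by
    intro x
    by_cases hx : x ∈ s
    · simpa [hx] using abs_le_mul_exp_neg_mul_exp_sq_div hK (hs x hx)
    · simp only [hx, not_false_eq_true, Set.indicator_of_notMem, norm_zero, c]
      positivity
  calc ‖∫ x, s.indicator f x ∂μ‖ ≤ ∫ x, c * exp (f x ^ 2 / K ^ 2) ∂μ :=
        norm_integral_le_of_norm_le ((integrable_exp_sq_div hf hμ).const_mul c)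
          (ae_of_all _ hpointwise)
    _ = c * ∫ x, exp (f x ^ 2 / K ^ 2) ∂μ := integral_const_mul _ _
    _ ≤ c * 2 := by gcongr; exact integral_exp_sq_div_le hf hμ
    _ = 2 * K * exp (-(M ^ 2 / (2 * K ^ 2))) := by ring

lemma integrable_of_lintegral_exp_sq_div_le (hf : Measurable f) (hK : 0 < K)
    (hμ : ∫⁻ x, ENNReal.ofReal (exp (f x ^ 2 / K ^ 2)) ∂μ ≤ 2) : Integrable f μ :=
  ((integrable_exp_sq_div hf hμ).const_mul K).mono' hf.aestronglyMeasurable <|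
    ae_of_all _ fun x ↦ by
      simpa using abs_le_mul_exp_neg_mul_exp_sq_div (M := 0) hK (by simp [sq_nonneg])

end ExpSquareMoment

section TotalVariation

variable {X : Type*} [MeasurableSpace X] {μ ν : Measure X} [IsFiniteMeasure μ] [IsFiniteMeasure ν]

lemma add_negPart_eq_add_posPart :
    μ + (μ.toSignedMeasure - ν.toSignedMeasure).toJordanDecomposition.negPart =
      ν + (μ.toSignedMeasure - ν.toSignedMeasure).toJordanDecomposition.posPart := by
  have hjordan := (μ.toSignedMeasure - ν.toSignedMeasure).toSignedMeasure_toJordanDecomposition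
  rw [JordanDecomposition.toSignedMeasure, sub_eq_sub_iff_add_eq_add] at hjordan
  rw [← Measure.toSignedMeasure_eq_toSignedMeasure_iff, Measure.toSignedMeasure_add,
    Measure.toSignedMeasure_add, add_comm ν.toSignedMeasure]
  exact hjordan.symm

lemma tvNorm_eq_posPart_add_negPart (s : SignedMeasure X) :
    tvNorm s = s.toJordanDecomposition.posPart.real Set.univ +
      s.toJordanDecomposition.negPart.real Set.univ :=
  measureReal_add_apply

lemma abs_integral_sub_le_mul_tvNorm {g : X → ℝ} (hg : Measurable g) {M : ℝ}
    (hgM : ∀ x, |g x| ≤ M) :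
    |∫ x, g x ∂μ - ∫ x, g x ∂ν| ≤ M * tvNorm (μ.toSignedMeasure - ν.toSignedMeasure) := by
  set j := (μ.toSignedMeasure - ν.toSignedMeasure).toJordanDecomposition
  have hint (ρ : Measure X) [IsFiniteMeasure ρ] : Integrable g ρ :=
    .of_bound hg.aestronglyMeasurable M (ae_of_all _ hgM)
  have hdiff : ∫ x, g x ∂μ - ∫ x, g x ∂ν = ∫ x, g x ∂j.posPart - ∫ x, g x ∂j.negPart := by
    have := congrArg (fun ρ ↦ ∫ x, g x ∂ρ) (add_negPart_eq_add_posPart (μ := μ) (ν := ν))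
    simp only [integral_add_measure (hint _) (hint _)] at this
    linarith
  have hbound (ρ : Measure X) [IsFiniteMeasure ρ] : |∫ x, g x ∂ρ| ≤ M * ρ.real Set.univ :=
    norm_integral_le_of_norm_le_const (f := g) (ae_of_all _ hgM)
  rw [hdiff, tvNorm_eq_posPart_add_negPart, mul_add]
  exact (abs_sub _ _).trans (add_le_add (hbound _) (hbound _))

end TotalVariation

section Bias

variable {X : Type*} [MeasurableSpace X] {μ ν : Measure X} [IsFiniteMeasure μ] [IsFiniteMeasure ν]
  {f : X → ℝ} {K : ℝ}

theorem abs_integral_sub_le_of_lintegral_exp_sq_div_le (hf : Measurable f) (hK : 0 < K)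
    (hμ : ∫⁻ x, ENNReal.ofReal (exp (f x ^ 2 / K ^ 2)) ∂μ ≤ 2)
    (hν : ∫⁻ x, ENNReal.ofReal (exp (f x ^ 2 / K ^ 2)) ∂ν ≤ 2) {M : ℝ} (hM : 0 ≤ M) :
    |∫ x, f x ∂μ - ∫ x, f x ∂ν| ≤
      M * tvNorm (μ.toSignedMeasure - ν.toSignedMeasure) +
        4 * K * exp (-(M ^ 2 / (2 * K ^ 2))) := by
  set s := {x | M < |f x|}
  have hs : MeasurableSet s := measurableSet_lt measurable_const hf.abs
  have hsplit (ρ : Measure X) (hρ : ∫⁻ x, ENNReal.ofReal (exp (f x ^ 2 / K ^ 2)) ∂ρ ≤ 2) :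
      ∫ x, f x ∂ρ = ∫ x, sᶜ.indicator f x ∂ρ + ∫ x, s.indicator f x ∂ρ := by
    have hfρ := integrable_of_lintegral_exp_sq_div_le hf hK hρ
    rw [← integral_add (hfρ.indicator hs.compl) (hfρ.indicator hs)]
    simp only [Set.indicator_compl_add_self_apply]
  have hbulk : |∫ x, sᶜ.indicator f x ∂μ - ∫ x, sᶜ.indicator f x ∂ν| ≤
      M * tvNorm (μ.toSignedMeasure - ν.toSignedMeasure) := by
    refine abs_integral_sub_le_mul_tvNorm (hf.indicator hs.compl) fun x ↦ ?_
    by_cases hx : x ∈ s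
    · simpa [hx] using hM
    · rw [Set.indicator_of_mem (Set.mem_compl hx)]
      exact not_lt.mp hx
  have htail (ρ : Measure X) (hρ : ∫⁻ x, ENNReal.ofReal (exp (f x ^ 2 / K ^ 2)) ∂ρ ≤ 2) :
      |∫ x, s.indicator f x ∂ρ| ≤ 2 * K * exp (-(M ^ 2 / (2 * K ^ 2))) :=
    norm_integral_indicator_le_of_sq_le hf hK hρ fun x hx ↦
      sq_le_sq.mpr ((abs_of_nonneg hM).trans_le (show M < |f x| from hx).le)
  rw [hsplit μ hμ, hsplit ν hν]
  calc _ = |(∫ x, sᶜ.indicator f x ∂μ - ∫ x, sᶜ.indicator f x ∂ν) +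
        (∫ x, s.indicator f x ∂μ - ∫ x, s.indicator f x ∂ν)| := by ring_nf
    _ ≤ _ := (abs_add_le _ _).trans (add_le_add hbulk ((abs_sub _ _).trans (by
          linarith [htail μ hμ, htail ν hν])))

theorem abs_integral_sub_le_mul_sqrt_log_of_lintegral_exp_sq_div_le (hf : Measurable f)
    (hK : 0 < K) (hμ : ∫⁻ x, ENNReal.ofReal (exp (f x ^ 2 / K ^ 2)) ∂μ ≤ 2)
    (hν : ∫⁻ x, ENNReal.ofReal (exp (f x ^ 2 / K ^ 2)) ∂ν ≤ 2)
    (hδ₀ : 0 < tvNorm (μ.toSignedMeasure - ν.toSignedMeasure))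
    (hδ : tvNorm (μ.toSignedMeasure - ν.toSignedMeasure) ≤ 1 / 2) :
    |∫ x, f x ∂μ - ∫ x, f x ∂ν| ≤
      10 * K * tvNorm (μ.toSignedMeasure - ν.toSignedMeasure) *
        √(log (1 / tvNorm (μ.toSignedMeasure - ν.toSignedMeasure))) := by
  set δ := tvNorm (μ.toSignedMeasure - ν.toSignedMeasure)
  set L := log (1 / δ)
  have hL : 1 / 4 ≤ L := by
    have : log 2 ≤ L := log_le_log (by norm_num) (by rw [le_div_iff₀ hδ₀]; linarith)
    linarith [log_two_gt_d9]
  have hexp : exp (-((K * √(2 * L)) ^ 2 / (2 * K ^ 2))) = δ := by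
    have hM : (K * √(2 * L)) ^ 2 / (2 * K ^ 2) = L := by
      rw [mul_pow, sq_sqrt (by linarith)]
      field_simp
    rw [hM, exp_neg, exp_log (by positivity), one_div, inv_inv]
  have hsqrt : √(2 * L) + 4 ≤ 10 * √L := by
    have hsqrt_two : √2 ≤ 3 / 2 := by
      nlinarith [sq_sqrt (show (0 : ℝ) ≤ 2 by norm_num), sqrt_nonneg 2]
    have hsqrt_L : 1 / 2 ≤ √L := (le_sqrt' (by norm_num)).mpr (by linarith)
    rw [sqrt_mul (by norm_num)]
    nlinarith [sqrt_nonneg L]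
  calc |∫ x, f x ∂μ - ∫ x, f x ∂ν|
      ≤ K * √(2 * L) * δ + 4 * K * exp (-((K * √(2 * L)) ^ 2 / (2 * K ^ 2))) :=
        abs_integral_sub_le_of_lintegral_exp_sq_div_le hf hK hμ hν (by positivity)
    _ = K * δ * (√(2 * L) + 4) := by rw [hexp]; ring
    _ ≤ K * δ * (10 * √L) := by gcongr
    _ = 10 * K * δ * √L := by ring

end Bias

/-- robustness of bounded-function balance for linear outcomes in the
sub-Gaussian case.  There is a universal constant `C > 0` such that for all `d ≥ 1`,
probability measures `Q, R` on `ℝ^d`, `K > 0` and `‖β‖₂ ≤ 1` with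
`∫ exp(⟨β,x⟩²/K²) dQ ≤ 2` and `∫ exp(⟨β,x⟩²/K²) dR ≤ 2`, if `δ := ‖Q − R‖_TV` satisfies
`0 < δ ≤ 1/2` then the bias of `x ↦ ⟨β,x⟩` is at most `C·K·δ·√(log(1/δ))`. -/
theorem stmt_9 :
    ∃ C : ℝ, 0 < C ∧
      ∀ (d : ℕ), 1 ≤ d →
      ∀ (Q R : Measure (EuclideanSpace ℝ (Fin d)))
        [IsProbabilityMeasure Q] [IsProbabilityMeasure R],
      ∀ K : ℝ, 0 < K →
      ∀ β : EuclideanSpace ℝ (Fin d), ‖β‖ ≤ 1 →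
        (∫⁻ x, ENNReal.ofReal (Real.exp (⟪β, x⟫ ^ 2 / K ^ 2)) ∂Q) ≤ 2 →
        (∫⁻ x, ENNReal.ofReal (Real.exp (⟪β, x⟫ ^ 2 / K ^ 2)) ∂(R)) ≤ 2 →
        0 < tvNorm (Q.toSignedMeasure - R.toSignedMeasure) →
        tvNorm (Q.toSignedMeasure - R.toSignedMeasure) ≤ 1 / 2 →
        |(∫ x, ⟪β, x⟫ ∂Q) - ∫ x, ⟪β, x⟫ ∂(R)| ≤
          C * K * tvNorm (Q.toSignedMeasure - R.toSignedMeasure) *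
            Real.sqrt (Real.log (1 / tvNorm (Q.toSignedMeasure - R.toSignedMeasure))) :=
  ⟨10, by norm_num, fun _ _ _ _ _ _ _ hK β _ hQ hR hδ₀ hδ ↦
    abs_integral_sub_le_mul_sqrt_log_of_lintegral_exp_sq_div_le
      (continuous_const.inner continuous_id).measurable hK hQ hR hδ₀ hδ⟩
end
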